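/- arXiv:2507.12117 — 4 statements merged into one kernel-verified Lean document; each statement's English description precedes it below -/
import Mathlib

section
/- For every 2×2 complex matrix ρ and all θ ∈ (0,π), φ ∈ ℝ, the sine bracket with each Pauli generator is realized by the first-order differential operators 𝒥: Q_{−i(σxρ−ρσx)}(θ,φ) = 2( sinφ · ∂Q_ρ/∂θ + cotθ cosφ · ∂Q_ρ/∂φ ), Q_{−i(σyρ−ρσy)}(θ,φ) = 2( −cosφ · ∂Q_ρ/∂θ + cotθ sinφ · ∂Q_ρ/∂φ ), and Q_{−i(σzρ−ρσz)}(θ,φ) = −2 · ∂Q_ρ/∂φ. -/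
open Matrix Complex Real MeasureTheory

noncomputable section

/-- The spin coherent state |θ,φ⟩ = cos(θ/2)|0⟩ + e^{iφ} sin(θ/2)|1⟩. -/
def cohVec (θ φ : ℝ) : Fin 2 → ℂ :=
  ![((Real.cos (θ / 2) : ℝ) : ℂ),
    Complex.exp (Complex.I * (φ : ℂ)) * ((Real.sin (θ / 2) : ℝ) : ℂ)]

/-- The Husimi Q function of a 2×2 complex matrix. -/
def Qfun (A : Matrix (Fin 2) (Fin 2) ℂ) (θ φ : ℝ) : ℂ :=
  (1 / (2 * Real.pi) : ℂ) *
    ∑ k, ∑ l, (starRingEnd ℂ) (cohVec θ φ k) * A k l * cohVec θ φ l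

/-- ∂Q_A/∂θ. -/
def Qθ (A : Matrix (Fin 2) (Fin 2) ℂ) (θ φ : ℝ) : ℂ :=
  deriv (fun t => Qfun A t φ) θ

/-- ∂Q_A/∂φ. -/
def Qφ (A : Matrix (Fin 2) (Fin 2) ℂ) (θ φ : ℝ) : ℂ :=
  deriv (fun p => Qfun A θ p) φ

def σx : Matrix (Fin 2) (Fin 2) ℂ := !![0, 1; 1, 0]
def σy : Matrix (Fin 2) (Fin 2) ℂ := !![0, -Complex.I; Complex.I, 0]
def σz : Matrix (Fin 2) (Fin 2) ℂ := !![1, 0; 0, -1]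

/-! In Bloch coordinates `n = (sin θ cos φ, sin θ sin φ, cos θ)` the Q function is
`Q_A = (4π)⁻¹ tr (A (1 + n · σ))`, an affine combination of `cos` and `sin` in each of `θ`
and `φ` separately, so its partial derivatives are explicit. The sine bracket `-i[σₖ, ρ]` acts
on the Pauli components of `ρ` as an infinitesimal rotation, and the three identities reduce to
`cot θ · sin θ = cos θ` and `cos² φ + sin² φ = 1`. -/

lemma Qfun_eq_bloch (A : Matrix (Fin 2) (Fin 2) ℂ) (θ φ : ℝ) :
    Qfun A θ φ = (4 * π : ℂ)⁻¹ * (A 0 0 + A 1 1 + (Real.cos θ : ℂ) * (A 0 0 - A 1 1)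
      + (Real.sin θ : ℂ) * ((Real.cos φ : ℂ) * (A 0 1 + A 1 0)
        + (Real.sin φ : ℂ) * (I * (A 0 1 - A 1 0)))) := by
  have hexp : Complex.exp (I * φ) = Real.cos φ + Real.sin φ * I := by
    rw [mul_comm, exp_mul_I, ofReal_cos, ofReal_sin]
  have hcos : Real.cos θ = 2 * Real.cos (θ / 2) ^ 2 - 1 := by
    rw [← Real.cos_two_mul, mul_div_cancel₀ θ two_ne_zero]
  have hsin : Real.sin θ = 2 * Real.sin (θ / 2) * Real.cos (θ / 2) := by
    rw [← Real.sin_two_mul, mul_div_cancel₀ θ two_ne_zero]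
  have hpyth_θ : (Real.sin (θ / 2) : ℂ) ^ 2 + (Real.cos (θ / 2) : ℂ) ^ 2 = 1 := by
    exact_mod_cast Real.sin_sq_add_cos_sq (θ / 2)
  have hpyth_φ : (Real.cos φ : ℂ) ^ 2 + (Real.sin φ : ℂ) ^ 2 = 1 := by
    exact_mod_cast Real.cos_sq_add_sin_sq φ
  simp only [Qfun, cohVec, Fin.sum_univ_two, cons_val_zero, cons_val_one, map_mul, conj_ofReal,
    hexp, map_add, conj_I, hcos, hsin, ofReal_mul, ofReal_sub, ofReal_pow, ofReal_ofNat,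
    ofReal_one]
  linear_combination (2 * π : ℂ)⁻¹ * A 1 1 * (Real.sin (θ / 2) : ℂ) ^ 2 *
    (hpyth_φ - (Real.sin φ : ℂ) ^ 2 * I_sq) + (2 * π : ℂ)⁻¹ * A 1 1 * hpyth_θ

lemma hasDerivAt_add_cos_mul_add_sin_mul (a b c : ℂ) (t : ℝ) :
    HasDerivAt (fun t : ℝ => a + (Real.cos t : ℂ) * b + (Real.sin t : ℂ) * c)
      (-(Real.sin t : ℂ) * b + (Real.cos t : ℂ) * c) t := by
  have hcos := ((Real.hasDerivAt_cos t).ofReal_comp.mul_const b).const_add a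
  have hsin := (Real.hasDerivAt_sin t).ofReal_comp.mul_const c
  rw [ofReal_neg] at hcos
  exact hcos.add hsin

lemma Qθ_eq (A : Matrix (Fin 2) (Fin 2) ℂ) (θ φ : ℝ) :
    Qθ A θ φ = (4 * π : ℂ)⁻¹ * (-(Real.sin θ : ℂ) * (A 0 0 - A 1 1)
      + (Real.cos θ : ℂ) * ((Real.cos φ : ℂ) * (A 0 1 + A 1 0)
        + (Real.sin φ : ℂ) * (I * (A 0 1 - A 1 0)))) := by
  simp only [Qθ, Qfun_eq_bloch]
  exact ((hasDerivAt_add_cos_mul_add_sin_mul _ _ _ θ).const_mul _).deriv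

lemma Qφ_eq (A : Matrix (Fin 2) (Fin 2) ℂ) (θ φ : ℝ) :
    Qφ A θ φ = (4 * π : ℂ)⁻¹ * ((Real.sin θ : ℂ) *
      (-(Real.sin φ : ℂ) * (A 0 1 + A 1 0) + (Real.cos φ : ℂ) * (I * (A 0 1 - A 1 0)))) := by
  have hQ : (fun φ => Qfun A θ φ) = fun φ : ℝ => (4 * π : ℂ)⁻¹ *
      (A 0 0 + A 1 1 + (Real.cos θ : ℂ) * (A 0 0 - A 1 1)
        + (Real.cos φ : ℂ) * ((Real.sin θ : ℂ) * (A 0 1 + A 1 0))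
        + (Real.sin φ : ℂ) * ((Real.sin θ : ℂ) * (I * (A 0 1 - A 1 0)))) := by
    funext φ
    rw [Qfun_eq_bloch]
    ring
  rw [Qφ, hQ, ((hasDerivAt_add_cos_mul_add_sin_mul _ _ _ φ).const_mul _).deriv]
  ring

section SineBracket

variable (ρ : Matrix (Fin 2) (Fin 2) ℂ)

lemma neg_I_smul_σx_commutator : (-I) • (σx * ρ - ρ * σx) =
    !![I * (ρ 0 1 - ρ 1 0), I * (ρ 0 0 - ρ 1 1);
      I * (ρ 1 1 - ρ 0 0), I * (ρ 1 0 - ρ 0 1)] := by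
  ext i j
  fin_cases i <;> fin_cases j <;> simp [σx, Matrix.mul_apply, Matrix.vecMul, dotProduct] <;> ring

lemma neg_I_smul_σy_commutator : (-I) • (σy * ρ - ρ * σy) =
    !![-(ρ 0 1 + ρ 1 0), ρ 0 0 - ρ 1 1; ρ 0 0 - ρ 1 1, ρ 0 1 + ρ 1 0] := by
  ext i j
  fin_cases i <;> fin_cases j <;> simp [σy, Matrix.mul_apply, Matrix.vecMul, dotProduct] <;>
    ring_nf <;> simp only [I_sq] <;> ring

lemma neg_I_smul_σz_commutator : (-I) • (σz * ρ - ρ * σz) =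
    !![0, -2 * I * ρ 0 1; 2 * I * ρ 1 0, 0] := by
  ext i j
  fin_cases i <;> fin_cases j <;> simp [σz, Matrix.mul_apply, Matrix.vecMul, dotProduct] <;> ring

lemma Qfun_neg_I_smul_σx_commutator {θ : ℝ} (hθ : Real.sin θ ≠ 0) (φ : ℝ) :
    Qfun ((-I) • (σx * ρ - ρ * σx)) θ φ =
      2 * (((Real.sin φ : ℝ) : ℂ) * Qθ ρ θ φ
        + ((Real.cos θ / Real.sin θ * Real.cos φ : ℝ) : ℂ) * Qφ ρ θ φ) := by
  have hcot : (Real.cos θ : ℂ) / Real.sin θ * Real.sin θ = Real.cos θ :=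
    div_mul_cancel₀ _ (ofReal_ne_zero.mpr hθ)
  have hpyth : (Real.cos φ : ℂ) ^ 2 + (Real.sin φ : ℂ) ^ 2 = 1 := by
    exact_mod_cast Real.cos_sq_add_sin_sq φ
  rw [neg_I_smul_σx_commutator, Qfun_eq_bloch, Qθ_eq, Qφ_eq]
  simp only [of_apply, cons_val', cons_val_zero, cons_val_one, empty_val', cons_val_fin_one,
    ofReal_mul, ofReal_div]
  linear_combination (4 * π : ℂ)⁻¹ * (-2 * (Real.cos θ : ℂ) * I * (ρ 0 1 - ρ 1 0) * hpyth
    - 2 * (Real.sin θ : ℂ) * (Real.sin φ : ℂ) * (ρ 1 1 - ρ 0 0) * I_sq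
    - 2 * (Real.cos φ : ℂ) * (-(Real.sin φ : ℂ) * (ρ 0 1 + ρ 1 0)
      + (Real.cos φ : ℂ) * (I * (ρ 0 1 - ρ 1 0))) * hcot)

lemma Qfun_neg_I_smul_σy_commutator {θ : ℝ} (hθ : Real.sin θ ≠ 0) (φ : ℝ) :
    Qfun ((-I) • (σy * ρ - ρ * σy)) θ φ =
      2 * (-((Real.cos φ : ℝ) : ℂ) * Qθ ρ θ φ
        + ((Real.cos θ / Real.sin θ * Real.sin φ : ℝ) : ℂ) * Qφ ρ θ φ) := by
  have hcot : (Real.cos θ : ℂ) / Real.sin θ * Real.sin θ = Real.cos θ :=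
    div_mul_cancel₀ _ (ofReal_ne_zero.mpr hθ)
  have hpyth : (Real.cos φ : ℂ) ^ 2 + (Real.sin φ : ℂ) ^ 2 = 1 := by
    exact_mod_cast Real.cos_sq_add_sin_sq φ
  rw [neg_I_smul_σy_commutator, Qfun_eq_bloch, Qθ_eq, Qφ_eq]
  simp only [of_apply, cons_val', cons_val_zero, cons_val_one, empty_val', cons_val_fin_one,
    ofReal_mul, ofReal_div]
  linear_combination (4 * π : ℂ)⁻¹ * (2 * (Real.cos θ : ℂ) * (ρ 0 1 + ρ 1 0) * hpyth
    - 2 * (Real.sin φ : ℂ) * (-(Real.sin φ : ℂ) * (ρ 0 1 + ρ 1 0)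
      + (Real.cos φ : ℂ) * (I * (ρ 0 1 - ρ 1 0))) * hcot)

lemma Qfun_neg_I_smul_σz_commutator (θ φ : ℝ) :
    Qfun ((-I) • (σz * ρ - ρ * σz)) θ φ = -2 * Qφ ρ θ φ := by
  rw [neg_I_smul_σz_commutator, Qfun_eq_bloch, Qφ_eq]
  simp only [of_apply, cons_val', cons_val_zero, cons_val_one, empty_val', cons_val_fin_one]
  linear_combination -(2 * π : ℂ)⁻¹ * Real.sin θ * Real.sin φ * (ρ 0 1 + ρ 1 0) * I_sq

end SineBracket

/-- the sine bracket with each Pauli generator is realized by the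
first-order differential operators 𝒥 on the Q function. -/
theorem sine_bracket_in_coordinates (ρ : Matrix (Fin 2) (Fin 2) ℂ)
    (θ φ : ℝ) (hθ : θ ∈ Set.Ioo (0 : ℝ) Real.pi) :
    Qfun ((-Complex.I) • (σx * ρ - ρ * σx)) θ φ =
      2 * (((Real.sin φ : ℝ) : ℂ) * Qθ ρ θ φ
        + ((Real.cos θ / Real.sin θ * Real.cos φ : ℝ) : ℂ) * Qφ ρ θ φ) ∧
    Qfun ((-Complex.I) • (σy * ρ - ρ * σy)) θ φ =
      2 * (-((Real.cos φ : ℝ) : ℂ) * Qθ ρ θ φ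
        + ((Real.cos θ / Real.sin θ * Real.sin φ : ℝ) : ℂ) * Qφ ρ θ φ) ∧
    Qfun ((-Complex.I) • (σz * ρ - ρ * σz)) θ φ = -2 * Qφ ρ θ φ := by
  have hsin : Real.sin θ ≠ 0 := (Real.sin_pos_of_pos_of_lt_pi hθ.1 hθ.2).ne'
  exact ⟨Qfun_neg_I_smul_σx_commutator ρ hsin φ, Qfun_neg_I_smul_σy_commutator ρ hsin φ,
    Qfun_neg_I_smul_σz_commutator ρ θ φ⟩
end
end

section
/- Let H be a 2×2 complex Hermitian matrix and let ρ : ℝ → M₂(ℂ) be a curve satisfying the von Neumann equation, i.e., for every t each entry of ρ is differentiable with derivative matrix ρ'(t) = −i(Hρ(t) − ρ(t)H). Then for every θ ∈ (0,π) and φ ∈ ℝ, the function t ↦ Q_{ρ(t)}(θ,φ) is differentiable with derivative (4π/sinθ)·( ∂Q_H/∂θ · ∂Q_{ρ(t)}/∂φ − ∂Q_H/∂φ · ∂Q_{ρ(t)}/∂θ ); that is, unitary evolution of the state is a sine-bracket (Poisson) flow of its Q function on the sphere. -/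
/-!
In the full-angle form `Q_A = (tr A + cos θ (A₀₀ - A₁₁) + sin θ (e^{iφ} A₀₁ + e^{-iφ} A₁₀)) / 4π`,
`∂_φ Q_A` carries a factor `sin θ`, so the bracket `(∂_θ Q_H ∂_φ Q_B - ∂_φ Q_H ∂_θ Q_B) / sin θ`
is a bilinear expression in the entries which one checks equals `Q_{-i[H,B]}`, using only
`e^{iφ} e^{-iφ} = 1`. Since `Q_A` is linear in `A`, the von Neumann equation gives
`d/dt Q_{ρ(t)} = Q_{-i[H,ρ(t)]}`.
-/

open Matrix Complex Real MeasureTheory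

noncomputable section

theorem Complex.exp_mul_exp_neg (z : ℂ) : exp z * exp (-z) = 1 := by
  rw [← Complex.exp_add, add_neg_cancel, Complex.exp_zero]

theorem hasDerivAt_cexp_mul_ofReal (s : ℂ) (φ : ℝ) :
    HasDerivAt (fun p : ℝ => exp (s * p)) (s * exp (s * φ)) φ := by
  simpa [mul_comm] using ((hasDerivAt_id φ).ofReal_comp.const_mul s).cexp

section HusimiQ

variable (A B : Matrix (Fin 2) (Fin 2) ℂ) (θ φ : ℝ)

theorem Qfun_eq_cos_sin :
    Qfun A θ φ = (1 / (4 * π) : ℂ) *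
      ((1 + (Real.cos θ : ℂ)) * A 0 0 + (1 - (Real.cos θ : ℂ)) * A 1 1 +
        (Real.sin θ : ℂ) * (exp (I * φ) * A 0 1 + exp (-I * φ) * A 1 0)) := by
  have hcos : Real.cos θ = 2 * Real.cos (θ / 2) ^ 2 - 1 := by
    rw [← Real.cos_two_mul]; ring_nf
  have hsin : Real.sin θ = 2 * Real.sin (θ / 2) * Real.cos (θ / 2) := by
    rw [← Real.sin_two_mul]; ring_nf
  have hpyth : ((Real.sin (θ / 2) : ℝ) : ℂ) ^ 2 + ((Real.cos (θ / 2) : ℝ) : ℂ) ^ 2 = 1 := by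
    exact_mod_cast Real.sin_sq_add_cos_sq (θ / 2)
  have hconj : (starRingEnd ℂ) (exp (I * φ)) = exp (-(I * φ)) := by
    rw [← Complex.exp_conj]; simp
  simp only [Qfun, cohVec, Fin.sum_univ_two, Matrix.cons_val_zero, Matrix.cons_val_one,
    map_mul, hconj, Complex.conj_ofReal, hcos, hsin, Complex.ofReal_mul, Complex.ofReal_sub,
    Complex.ofReal_pow, Complex.ofReal_ofNat, Complex.ofReal_one, neg_mul]
  linear_combination (1 / (2 * (π : ℂ))) * A 1 1 *
    ((Real.sin (θ / 2) : ℂ) ^ 2 * Complex.exp_mul_exp_neg (I * φ) + hpyth)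

theorem hasDerivAt_Qfun_theta :
    HasDerivAt (fun t => Qfun A t φ) ((1 / (4 * π) : ℂ) *
      (-(Real.sin θ : ℂ) * (A 0 0 - A 1 1) +
        (Real.cos θ : ℂ) * (exp (I * φ) * A 0 1 + exp (-I * φ) * A 1 0))) θ := by
  simp_rw [Qfun_eq_cos_sin]
  have hcos := (Real.hasDerivAt_cos θ).ofReal_comp
  have hsin := (Real.hasDerivAt_sin θ).ofReal_comp
  refine (((hcos.const_add 1).mul_const (A 0 0)).add ((hcos.const_sub 1).mul_const (A 1 1)) |>.add
    (hsin.mul_const (exp (I * φ) * A 0 1 + exp (-I * φ) * A 1 0))).const_mul (1 / (4 * π) : ℂ)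
    |>.congr_deriv ?_
  push_cast
  ring

theorem hasDerivAt_Qfun_phi :
    HasDerivAt (fun p => Qfun A θ p) ((1 / (4 * π) : ℂ) *
      ((Real.sin θ : ℂ) * (I * (exp (I * φ) * A 0 1 - exp (-I * φ) * A 1 0)))) φ := by
  simp_rw [Qfun_eq_cos_sin]
  refine (((hasDerivAt_cexp_mul_ofReal I φ).mul_const (A 0 1)).fun_add
    ((hasDerivAt_cexp_mul_ofReal (-I) φ).mul_const (A 1 0)) |>.const_mul (Real.sin θ : ℂ)
    |>.const_add ((1 + (Real.cos θ : ℂ)) * A 0 0 + (1 - (Real.cos θ : ℂ)) * A 1 1)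
    |>.const_mul (1 / (4 * π) : ℂ)) |>.congr_deriv ?_
  ring

theorem Qfun_neg_I_smul_commutator (hθ : Real.sin θ ≠ 0) :
    Qfun (-I • (A * B - B * A)) θ φ = ((4 * π / Real.sin θ : ℝ) : ℂ) *
      (Qθ A θ φ * Qφ B θ φ - Qφ A θ φ * Qθ B θ φ) := by
  rw [Qθ, Qθ, Qφ, Qφ, (hasDerivAt_Qfun_theta A θ φ).deriv, (hasDerivAt_Qfun_theta B θ φ).deriv,
    (hasDerivAt_Qfun_phi A θ φ).deriv, (hasDerivAt_Qfun_phi B θ φ).deriv, Qfun_eq_cos_sin]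
  simp only [Matrix.smul_apply, Matrix.sub_apply, Matrix.mul_apply, Fin.sum_univ_two, smul_eq_mul,
    Complex.ofReal_div, Complex.ofReal_mul, Complex.ofReal_ofNat]
  have hπ : (π : ℂ) ≠ 0 := Complex.ofReal_ne_zero.mpr Real.pi_ne_zero
  have hsin : (Real.sin θ : ℂ) ≠ 0 := Complex.ofReal_ne_zero.mpr hθ
  field_simp
  linear_combination 2 * (Real.cos θ : ℂ) * (A 0 1 * B 1 0 - B 0 1 * A 1 0) *
    Complex.exp_mul_exp_neg (I * φ)

end HusimiQ

theorem hasDerivAt_Qfun_of_hasDerivAt_entries {ρ : ℝ → Matrix (Fin 2) (Fin 2) ℂ}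
    {ρ' : Matrix (Fin 2) (Fin 2) ℂ} {t : ℝ} (h : ∀ i j, HasDerivAt (fun t => ρ t i j) (ρ' i j) t) (θ φ : ℝ) :
    HasDerivAt (fun t => Qfun (ρ t) θ φ) (Qfun ρ' θ φ) t :=
  .const_mul _ <| .fun_sum fun k _ => .fun_sum fun l _ => ((h k l).const_mul _).mul_const _

theorem unitary_evolution_is_sine_bracket_flow_general
    (H : Matrix (Fin 2) (Fin 2) ℂ)
    (ρ : ℝ → Matrix (Fin 2) (Fin 2) ℂ)
    (hρ : ∀ t, ∀ i j, HasDerivAt (fun t' => ρ t' i j)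
      (((-Complex.I) • (H * ρ t - ρ t * H)) i j) t) :
    ∀ θ ∈ Set.Ioo (0 : ℝ) Real.pi, ∀ φ : ℝ, ∀ t : ℝ,
      HasDerivAt (fun t' => Qfun (ρ t') θ φ)
        (((4 * Real.pi / Real.sin θ : ℝ) : ℂ) *
          (Qθ H θ φ * Qφ (ρ t) θ φ - Qφ H θ φ * Qθ (ρ t) θ φ)) t := by
  intro θ hθ φ t
  rw [← Qfun_neg_I_smul_commutator _ _ _ _ (Real.sin_pos_of_pos_of_lt_pi hθ.1 hθ.2).ne']
  exact hasDerivAt_Qfun_of_hasDerivAt_entries (hρ t) θ φ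

/-- unitary (von Neumann) evolution of the state is a sine-bracket
(Poisson) flow of its Q function on the sphere. -/
theorem unitary_evolution_is_sine_bracket_flow
    (H : Matrix (Fin 2) (Fin 2) ℂ) (hH : H.IsHermitian)
    (ρ : ℝ → Matrix (Fin 2) (Fin 2) ℂ)
    (hρ : ∀ t, ∀ i j, HasDerivAt (fun t' => ρ t' i j)
      (((-Complex.I) • (H * ρ t - ρ t * H)) i j) t) :
    ∀ θ ∈ Set.Ioo (0 : ℝ) Real.pi, ∀ φ : ℝ, ∀ t : ℝ,
      HasDerivAt (fun t' => Qfun (ρ t') θ φ)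
        (((4 * Real.pi / Real.sin θ : ℝ) : ℂ) *
          (Qθ H θ φ * Qφ (ρ t) θ φ - Qφ H θ φ * Qθ (ρ t) θ φ)) t :=
  unitary_evolution_is_sine_bracket_flow_general H ρ hρ
end
end

section
/- Fix s ∈ [−1,1], N ≥ 1, and a map μ : Fin N → {x,y,z}. For every complex matrix ρ indexed by (Fin N → Fin 2), the full-weight Pauli moments are recovered from the s-parametrized phase-space function by the integral identity ∫ f^{(s)}_ρ(Ω) · ∏_{i} n_{μ(i)}(θ_i,φ_i) dΩ = (3^{(1+s)/2}/3)^N · Tr[ ρ · ⊗_{i} σ_{μ(i)} ], where f^{(s)}_ρ(Ω) = Tr[ ρ · ⊗_{i} Δ^{(s)}(θ_i,φ_i) ], the integral is over the product of N spheres with measure ∏_i sinθ_i dθ_i dφ_i, and ⊗_i σ_{μ(i)} is the matrix with entries ∏_i σ_{μ(i)}(b(i),b'(i)). -/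
open Matrix Complex Real MeasureTheory

noncomputable section

/-- λ(s) = 3^{(1+s)/2}. -/
def lam (s : ℝ) : ℝ := (3 : ℝ) ^ ((1 + s) / 2)

/-- The s-parametrized Stratonovich–Weyl kernel
Δ^{(s)}(θ,φ) = (1/(2π))·( λ(s) |θ,φ⟩⟨θ,φ| − ((λ(s) − 1)/2)·I₂ ). -/
def swKernel (s θ φ : ℝ) : Matrix (Fin 2) (Fin 2) ℂ :=
  ((1 / (2 * Real.pi) : ℝ) : ℂ) •
    (((lam s : ℝ) : ℂ) • Matrix.of (fun k l => cohVec θ φ k * (starRingEnd ℂ) (cohVec θ φ l))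
      - (((lam s - 1) / 2 : ℝ) : ℂ) • (1 : Matrix (Fin 2) (Fin 2) ℂ))

/-- The Pauli matrices indexed by the directions x, y, z. -/
def pauli3 : Fin 3 → Matrix (Fin 2) (Fin 2) ℂ := ![σx, σy, σz]

/-- The components of the Bloch vector field n(θ,φ) = (sinθcosφ, sinθsinφ, cosθ). -/
def blochComp : Fin 3 → ℝ → ℝ → ℝ :=
  ![fun θ φ => Real.sin θ * Real.cos φ,
    fun θ φ => Real.sin θ * Real.sin φ,
    fun θ _ => Real.cos θ]

/-- The N-qubit s-parametrized phase-space function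
f^{(s)}_ρ(Ω) = Tr[ρ · ⊗ᵢ Δ^{(s)}(θᵢ,φᵢ)], where a point of one sphere is a pair
(θ, φ) : ℝ × ℝ. -/
def fS (N : ℕ) (s : ℝ) (ρ : Matrix (Fin N → Fin 2) (Fin N → Fin 2) ℂ)
    (Ω : Fin N → ℝ × ℝ) : ℂ :=
  Matrix.trace (ρ * Matrix.of (fun b b' => ∏ i, swKernel s (Ω i).1 (Ω i).2 (b i) (b' i)))

/-- The measure dθ dφ on one sphere's coordinate chart [0,π] × [0,2π]
(the sinθ weight is put into the integrand below). -/
def chartMeasure : Measure (ℝ × ℝ) :=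
  (volume.restrict (Set.Icc (0:ℝ) Real.pi)).prod
    (volume.restrict (Set.Icc (0:ℝ) (2 * Real.pi)))

/-!
Since |θ,φ⟩⟨θ,φ| = (I + n·σ)/2, the kernel has the Bloch form
Δ^{(s)}(θ,φ) = (I + λ(s) n(θ,φ)·σ)/(4π). Over the sphere ∫ n_m dΩ = 0 and
∫ n_j n_m dΩ = (4π/3) δ_{jm}, so for one qubit ∫ Δ^{(s)} n_m dΩ = (λ(s)/3) σ_m entrywise.
For N qubits, expanding the trace writes the integrand as a finite sum of products of one-qubit
integrands, and Fubini on the product of spheres factors each of them.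
-/

lemma cohVec_outer_eq (θ φ : ℝ) :
    Matrix.of (fun k l => cohVec θ φ k * starRingEnd ℂ (cohVec θ φ l))
      = (2⁻¹ : ℂ) • (1 + ∑ j, (blochComp j θ φ : ℂ) • pauli3 j) := by
  have hcos : Real.cos θ = 2 * Real.cos (θ / 2) ^ 2 - 1 := by
    rw [← Real.cos_two_mul]; ring_nf
  have hsin : Real.sin θ = 2 * Real.sin (θ / 2) * Real.cos (θ / 2) := by
    rw [← Real.sin_two_mul]; ring_nf
  have hpyth : (Real.sin (θ / 2) : ℂ) ^ 2 + (Real.cos (θ / 2) : ℂ) ^ 2 = 1 := by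
    exact_mod_cast Real.sin_sq_add_cos_sq (θ / 2)
  have hexp : Complex.exp (Complex.I * φ) = Real.cos φ + Real.sin φ * Complex.I := by
    rw [mul_comm, Complex.exp_mul_I, ← Complex.ofReal_cos, ← Complex.ofReal_sin]
  have hphase : (Real.cos φ : ℂ) ^ 2 + (Real.sin φ : ℂ) ^ 2 = 1 := by
    exact_mod_cast Real.cos_sq_add_sin_sq φ
  ext k l
  fin_cases k <;> fin_cases l <;>
    simp [cohVec, blochComp, pauli3, σx, σy, σz, Fin.sum_univ_three, hexp, hcos, hsin,
      -Complex.ofReal_cos, -Complex.ofReal_sin]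
  · ring
  · ring
  · ring
  · linear_combination (Real.sin (θ / 2) : ℂ) ^ 2 * hphase + hpyth
      - (Real.sin (θ / 2) : ℂ) ^ 2 * (Real.sin φ : ℂ) ^ 2 * Complex.I_sq

lemma swKernel_eq_bloch (s θ φ : ℝ) :
    swKernel s θ φ
      = ((4 * π)⁻¹ : ℂ) • (1 + (lam s : ℂ) • ∑ j, (blochComp j θ φ : ℂ) • pauli3 j) := by
  rw [swKernel, cohVec_outer_eq]
  push_cast
  module

def blochPolar : Fin 3 → ℝ → ℝ := ![Real.sin, Real.sin, Real.cos]

def blochAzimuth : Fin 3 → ℝ → ℝ := ![Real.cos, Real.sin, fun _ => 1]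

lemma blochComp_eq_blochPolar_mul_blochAzimuth (j : Fin 3) (θ φ : ℝ) :
    blochComp j θ φ = blochPolar j θ * blochAzimuth j φ := by
  fin_cases j <;> simp [blochComp, blochPolar, blochAzimuth]

lemma continuous_blochComp (j : Fin 3) : Continuous fun p : ℝ × ℝ => blochComp j p.1 p.2 := by
  fin_cases j <;> simp only [blochComp] <;> simp <;> fun_prop

lemma continuous_swKernel_apply (s : ℝ) (k l : Fin 2) :
    Continuous fun p : ℝ × ℝ => swKernel s p.1 p.2 k l := by
  simp only [swKernel_eq_bloch, Matrix.smul_apply, Matrix.add_apply, Matrix.sum_apply,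
    smul_eq_mul]
  have := continuous_blochComp
  fun_prop

instance : IsFiniteMeasure chartMeasure := by
  unfold chartMeasure; infer_instance

lemma integrable_chartMeasure {E : Type*} [NormedAddCommGroup E] {f : ℝ × ℝ → E}
    (hf : Continuous f) : Integrable f chartMeasure := by
  rw [chartMeasure, Measure.prod_restrict, ← Measure.volume_eq_prod]
  exact hf.continuousOn.integrableOn_compact (isCompact_Icc.prod isCompact_Icc)

lemma integral_chartMeasure_mul (f g : ℝ → ℝ) :
    ∫ p, f p.1 * g p.2 ∂chartMeasure = (∫ θ in 0..π, f θ) * ∫ φ in 0..2 * π, g φ := by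
  rw [chartMeasure, integral_prod_mul, intervalIntegral.integral_of_le pi_nonneg,
    intervalIntegral.integral_of_le (by positivity), integral_Icc_eq_integral_Ioc,
    integral_Icc_eq_integral_Ioc]

lemma integral_blochComp_mul_sin (m : Fin 3) :
    ∫ p, blochComp m p.1 p.2 * Real.sin p.1 ∂chartMeasure = 0 := by
  simp only [blochComp_eq_blochPolar_mul_blochAzimuth, mul_right_comm _ (blochAzimuth m _)]
  rw [integral_chartMeasure_mul (fun θ => blochPolar m θ * Real.sin θ) (blochAzimuth m)]
  fin_cases m <;> simp [blochPolar, blochAzimuth, mul_comm (Real.cos _) (Real.sin _)]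

lemma integral_blochComp_mul_blochComp_mul_sin (j m : Fin 3) :
    ∫ p, blochComp j p.1 p.2 * blochComp m p.1 p.2 * Real.sin p.1 ∂chartMeasure
      = if j = m then 4 * π / 3 else 0 := by
  have hsep : ∀ p : ℝ × ℝ, blochComp j p.1 p.2 * blochComp m p.1 p.2 * Real.sin p.1
      = (blochPolar j p.1 * blochPolar m p.1 * Real.sin p.1)
        * (blochAzimuth j p.2 * blochAzimuth m p.2) := by
    intro p
    rw [blochComp_eq_blochPolar_mul_blochAzimuth, blochComp_eq_blochPolar_mul_blochAzimuth]
    ring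
  simp only [hsep]
  rw [integral_chartMeasure_mul (fun θ => blochPolar j θ * blochPolar m θ * Real.sin θ)
    (fun φ => blochAzimuth j φ * blochAzimuth m φ)]
  have hsss : ∫ θ in 0..π, Real.sin θ * Real.sin θ * Real.sin θ = 4 / 3 := by
    simp only [← pow_two, ← pow_succ, integral_sin_pow_three]; norm_num
  have hccs : ∫ θ in 0..π, Real.cos θ * Real.cos θ * Real.sin θ = 2 / 3 := by
    simp only [← pow_two, mul_comm _ (Real.sin _), integral_sin_mul_cos_sq]; norm_num
  have hcc : ∫ φ in 0..2 * π, Real.cos φ * Real.cos φ = π := by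
    simp only [← pow_two, integral_cos_sq]; simp
  have hss : ∫ φ in 0..2 * π, Real.sin φ * Real.sin φ = π := by
    simp only [← pow_two, integral_sin_sq]; simp
  have hcs : ∫ φ in 0..2 * π, Real.cos φ * Real.sin φ = 0 := by
    simp only [mul_comm (Real.cos _), integral_sin_mul_cos₁]; simp
  fin_cases j <;> fin_cases m <;> simp [blochPolar, blochAzimuth, hsss, hccs, hcc, hss, hcs] <;>
    ring

lemma integrable_swKernel_apply_mul_blochComp (s : ℝ) (m : Fin 3) (k l : Fin 2) :
    Integrable (fun p : ℝ × ℝ => swKernel s p.1 p.2 k l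
      * ((blochComp m p.1 p.2 * Real.sin p.1 : ℝ) : ℂ)) chartMeasure := by
  have := continuous_swKernel_apply s k l
  have := continuous_blochComp m
  exact integrable_chartMeasure (by fun_prop)

lemma integral_swKernel_apply_mul_blochComp (s : ℝ) (m : Fin 3) (k l : Fin 2) :
    ∫ p, swKernel s p.1 p.2 k l * ((blochComp m p.1 p.2 * Real.sin p.1 : ℝ) : ℂ) ∂chartMeasure
      = ((lam s / 3 : ℝ) : ℂ) * pauli3 m k l := by
  have hn := continuous_blochComp
  have hint : ∀ j, Integrable (fun p : ℝ × ℝ =>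
      pauli3 j k l * ((blochComp j p.1 p.2 * blochComp m p.1 p.2 * Real.sin p.1 : ℝ) : ℂ))
      chartMeasure :=
    fun j => integrable_chartMeasure (by fun_prop)
  have hint₀ : Integrable (fun p : ℝ × ℝ =>
      (1 : Matrix (Fin 2) (Fin 2) ℂ) k l * ((blochComp m p.1 p.2 * Real.sin p.1 : ℝ) : ℂ))
      chartMeasure :=
    integrable_chartMeasure (by fun_prop)
  calc _ = ∫ p, ((4 * π)⁻¹ : ℂ) *
        ((1 : Matrix (Fin 2) (Fin 2) ℂ) k l * ((blochComp m p.1 p.2 * Real.sin p.1 : ℝ) : ℂ)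
          + lam s * ∑ j, pauli3 j k l
              * ((blochComp j p.1 p.2 * blochComp m p.1 p.2 * Real.sin p.1 : ℝ) : ℂ))
        ∂chartMeasure := by
        refine integral_congr_ae (Filter.Eventually.of_forall fun p => ?_)
        simp only [swKernel_eq_bloch, Matrix.smul_apply, Matrix.add_apply, smul_eq_mul,
          Fin.sum_univ_three]
        push_cast
        ring
    _ = ((4 * π)⁻¹ : ℂ) *
        ((1 : Matrix (Fin 2) (Fin 2) ℂ) k l
            * ((∫ p, blochComp m p.1 p.2 * Real.sin p.1 ∂chartMeasure : ℝ) : ℂ)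
          + lam s * ∑ j, pauli3 j k l
              * ((∫ p, blochComp j p.1 p.2 * blochComp m p.1 p.2 * Real.sin p.1
                  ∂chartMeasure : ℝ) : ℂ)) := by
        rw [integral_const_mul,
          integral_add hint₀ ((integrable_finsetSum _ fun j _ => hint j).const_mul _),
          integral_const_mul, integral_const_mul, integral_finsetSum _ fun j _ => hint j]
        simp only [integral_const_mul, integral_complex_ofReal]
    _ = _ := by
        simp only [integral_blochComp_mul_sin, integral_blochComp_mul_blochComp_mul_sin,
          apply_ite ((↑) : ℝ → ℂ), mul_ite, Complex.ofReal_zero, mul_zero, zero_add,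
          Finset.sum_ite_eq', Finset.mem_univ, if_true]
        push_cast
        field_simp

theorem integral_trace_mul_kronecker_mul_prod {ι E n 𝕜 : Type*} [Fintype ι] [DecidableEq ι]
    [Fintype n] [RCLike 𝕜] [MeasurableSpace E] {ν : ι → Measure E} [∀ i, SigmaFinite (ν i)]
    (ρ : Matrix (ι → n) (ι → n) 𝕜) (K : ι → E → Matrix n n 𝕜) (g : ι → E → 𝕜)
    (hK : ∀ i k l, Integrable (fun y => K i y k l * g i y) (ν i)) :
    ∫ x, trace (ρ * of fun b b' => ∏ i, K i (x i) (b i) (b' i)) * ∏ i, g i (x i) ∂Measure.pi ν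
      = trace (ρ * of fun b b' => ∏ i, ∫ y, K i y (b i) (b' i) * g i y ∂ν i) := by
  have hint : ∀ b c : ι → n, Integrable
      (fun x : ι → E => ∏ i, (K i (x i) (c i) (b i) * g i (x i))) (Measure.pi ν) :=
    fun b c => Integrable.fintype_prod fun i => hK i (c i) (b i)
  have hexpand : ∀ x : ι → E,
      trace (ρ * of fun b b' => ∏ i, K i (x i) (b i) (b' i)) * ∏ i, g i (x i)
        = ∑ b, ∑ c, ρ b c * ∏ i, (K i (x i) (c i) (b i) * g i (x i)) := by
    intro x
    simp only [trace, diag_apply, mul_apply, of_apply, Finset.sum_mul, mul_assoc,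
      ← Finset.prod_mul_distrib]
  simp only [hexpand]
  simp only [trace, diag_apply, mul_apply, of_apply]
  rw [integral_finsetSum _ fun b _ =>
    integrable_finsetSum _ fun c _ => (hint b c).const_mul (ρ b c)]
  refine Finset.sum_congr rfl fun b _ => ?_
  rw [integral_finsetSum _ fun c _ => (hint b c).const_mul (ρ b c)]
  refine Finset.sum_congr rfl fun c _ => ?_
  rw [integral_const_mul,
    integral_fintype_prod_eq_prod (fun i y => K i y (c i) (b i) * g i y)]

theorem many_qubit_mgf_full_weight_moment_general (s : ℝ)
    (N : ℕ) (μ : Fin N → Fin 3)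
    (ρ : Matrix (Fin N → Fin 2) (Fin N → Fin 2) ℂ) :
    (∫ Ω : Fin N → ℝ × ℝ,
        fS N s ρ Ω * ∏ i, ((blochComp (μ i) (Ω i).1 (Ω i).2 * Real.sin (Ω i).1 : ℝ) : ℂ)
      ∂(Measure.pi fun _ : Fin N => chartMeasure))
    = (((lam s / 3 : ℝ) : ℂ)) ^ N *
        Matrix.trace (ρ * Matrix.of (fun b b' => ∏ i, pauli3 (μ i) (b i) (b' i))) := by
  have hfubini := integral_trace_mul_kronecker_mul_prod (ν := fun _ : Fin N => chartMeasure) ρ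
    (fun _ p => swKernel s p.1 p.2)
    (fun i p => ((blochComp (μ i) p.1 p.2 * Real.sin p.1 : ℝ) : ℂ))
    fun i => integrable_swKernel_apply_mul_blochComp s (μ i)
  beta_reduce at hfubini
  simp only [fS, hfubini, integral_swKernel_apply_mul_blochComp, Finset.prod_mul_distrib,
    Finset.prod_const, Finset.card_univ, Fintype.card_fin]
  have hscal : (of fun b b' : Fin N → Fin 2 =>
        ((lam s / 3 : ℝ) : ℂ) ^ N * ∏ i, pauli3 (μ i) (b i) (b' i))
      = ((lam s / 3 : ℝ) : ℂ) ^ N • of fun b b' : Fin N → Fin 2 => ∏ i, pauli3 (μ i) (b i) (b' i) :=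
    rfl
  rw [hscal, Matrix.mul_smul, trace_smul, smul_eq_mul]

/-- full-weight Pauli moments are recovered from the s-parametrized
phase-space function: ∫ f^{(s)}_ρ(Ω) ∏ᵢ n_{μ(i)}(θᵢ,φᵢ) dΩ = (λ(s)/3)^N · Tr[ρ ⊗ᵢ σ_{μ(i)}],
where dΩ = ∏ᵢ sinθᵢ dθᵢ dφᵢ. -/
theorem many_qubit_mgf_full_weight_moment (s : ℝ) (hs : s ∈ Set.Icc (-1 : ℝ) 1)
    (N : ℕ) (hN : 1 ≤ N) (μ : Fin N → Fin 3)
    (ρ : Matrix (Fin N → Fin 2) (Fin N → Fin 2) ℂ) :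
    (∫ Ω : Fin N → ℝ × ℝ,
        fS N s ρ Ω * ∏ i, ((blochComp (μ i) (Ω i).1 (Ω i).2 * Real.sin (Ω i).1 : ℝ) : ℂ)
      ∂(Measure.pi fun _ : Fin N => chartMeasure))
    = (((lam s / 3 : ℝ) : ℂ)) ^ N *
        Matrix.trace (ρ * Matrix.of (fun b b' => ∏ i, pauli3 (μ i) (b i) (b' i))) :=
  many_qubit_mgf_full_weight_moment_general s N μ ρ
end
end

section
/- Fix s ∈ [−1,1]. The Stratonovich–Weyl map is inverted by the dual kernel: for every 2×2 complex matrix A, the matrix-valued integral 2π · ∫₀^{2π}∫₀^π Tr[A Δ^{(s)}(θ,φ)] · Δ^{(−s)}(θ,φ) sinθ dθ dφ equals A. -/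
open Matrix Complex Real MeasureTheory

noncomputable section

/-!
Write `Δ^{(s)} = (2π)⁻¹ (λ(s) P - (λ(s) - 1)/2 · I)` with `P = |θ,φ⟩⟨θ,φ|`. Since
`P_{ij} = a_i a_j e^{i(i-j)φ}` with real amplitudes `a = (cos(θ/2), sin(θ/2))`, the `φ`-integral
kills every monomial whose phase does not cancel, and the surviving `θ`-integrals are elementary.
This gives the sphere moments `∫ 1 = 4π`, `∫ P = 2π I` and `∫ Tr(AP) P = (2π/3)(A + Tr A · I)`.
Expanding `Tr(AΔ^{(s)}) Δ^{(-s)}` and integrating, with `m = λ(s)`, `n = λ(-s)`, the left-hand side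
becomes `(mn/3) A + (mn/3 - (mn - 1)/2) Tr A · I`, which is `A` because `λ(s) λ(-s) = 3`.
-/

open Function

local notation "δ" => (1 : Matrix (Fin 2) (Fin 2) ℂ)

theorem integral_quadratic_cos_mul_sin (a b c : ℝ) :
    ∫ θ in (0:ℝ)..π, (a + b * Real.cos θ + c * Real.cos θ ^ 2) * Real.sin θ =
      2 * a + 2 * c / 3 := by
  have hderiv (θ : ℝ) : HasDerivAt
      (fun x => -(a * Real.cos x + b / 2 * Real.cos x ^ 2 + c / 3 * Real.cos x ^ 3))
      ((a + b * Real.cos θ + c * Real.cos θ ^ 2) * Real.sin θ) θ := by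
    have h := Real.hasDerivAt_cos θ
    refine (((h.const_mul a).add ((h.pow 2).const_mul (b / 2))).add
      ((h.pow 3).const_mul (c / 3))).neg.congr_deriv ?_
    push_cast; ring
  rw [intervalIntegral.integral_eq_sub_of_hasDerivAt (fun θ _ => hderiv θ)
    (by apply Continuous.intervalIntegrable; fun_prop)]
  norm_num; ring

theorem integral_eq_of_eq_quadratic_cos_mul_sin {f : ℝ → ℝ} (a b c : ℝ)
    (hf : ∀ θ, f θ = (a + b * Real.cos θ + c * Real.cos θ ^ 2) * Real.sin θ) :
    ∫ θ in (0:ℝ)..π, f θ = 2 * a + 2 * c / 3 := by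
  simp only [hf, integral_quadratic_cos_mul_sin]

theorem cos_half_sq (θ : ℝ) : Real.cos (θ / 2) ^ 2 = (1 + Real.cos θ) / 2 := by
  rw [Real.cos_sq, mul_div_cancel₀ _ two_ne_zero]; ring

theorem sin_half_sq (θ : ℝ) : Real.sin (θ / 2) ^ 2 = (1 - Real.cos θ) / 2 := by
  rw [Real.sin_sq, cos_half_sq]; ring

def cohAmp (θ : ℝ) : Fin 2 → ℝ := ![Real.cos (θ / 2), Real.sin (θ / 2)]

@[simp] theorem cohAmp_zero (θ : ℝ) : cohAmp θ 0 = Real.cos (θ / 2) := rfl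

@[simp] theorem cohAmp_one (θ : ℝ) : cohAmp θ 1 = Real.sin (θ / 2) := rfl

@[fun_prop] theorem continuous_cohAmp (i : Fin 2) : Continuous fun θ => cohAmp θ i := by
  match i with
  | 0 => simp only [cohAmp_zero]; fun_prop
  | 1 => simp only [cohAmp_one]; fun_prop

theorem integral_cohAmp_sq_mul_sin (i : Fin 2) :
    ∫ θ in (0:ℝ)..π, cohAmp θ i ^ 2 * Real.sin θ = 1 := by
  match i with
  | 0 => rw [integral_eq_of_eq_quadratic_cos_mul_sin (1/2) (1/2) 0 fun θ => by
      rw [cohAmp_zero, cos_half_sq]; ring]; norm_num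
  | 1 => rw [integral_eq_of_eq_quadratic_cos_mul_sin (1/2) (-1/2) 0 fun θ => by
      rw [cohAmp_one, sin_half_sq]; ring]; norm_num

theorem integral_cohAmp_sq_mul_cohAmp_sq_mul_sin (i k : Fin 2) :
    ∫ θ in (0:ℝ)..π, cohAmp θ i ^ 2 * cohAmp θ k ^ 2 * Real.sin θ =
      if i = k then 2 / 3 else 1 / 3 := by
  match i, k with
  | 0, 0 => rw [integral_eq_of_eq_quadratic_cos_mul_sin (1/4) (1/2) (1/4) fun θ => by
      rw [cohAmp_zero, cos_half_sq]; ring]; norm_num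
  | 1, 1 => rw [integral_eq_of_eq_quadratic_cos_mul_sin (1/4) (-1/2) (1/4) fun θ => by
      rw [cohAmp_one, sin_half_sq]; ring]; norm_num
  | 0, 1 => rw [integral_eq_of_eq_quadratic_cos_mul_sin (1/4) 0 (-1/4) fun θ => by
      rw [cohAmp_zero, cohAmp_one, cos_half_sq, sin_half_sq]; ring]; norm_num
  | 1, 0 => rw [integral_eq_of_eq_quadratic_cos_mul_sin (1/4) 0 (-1/4) fun θ => by
      rw [cohAmp_zero, cohAmp_one, cos_half_sq, sin_half_sq]; ring]; norm_num

theorem integral_exp_I_mul_zpow (n : ℤ) :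
    ∫ φ in (0:ℝ)..2 * π, exp (I * φ) ^ n = if n = 0 then 2 * π else 0 := by
  split_ifs with hn
  · simp [hn]
  have hc : (n * I : ℂ) ≠ 0 := mul_ne_zero (Int.cast_ne_zero.mpr hn) I_ne_zero
  have hperiod : exp (n * I * (2 * π : ℝ)) = 1 := by
    rw [show (n * I * (2 * π : ℝ) : ℂ) = n * (2 * π * I) by push_cast; ring]
    exact exp_int_mul_two_pi_mul_I n
  simp_rw [← exp_int_mul, ← mul_assoc]
  rw [integral_exp_mul_complex hc, hperiod]
  simp

def sphereIntegral (f : ℝ → ℝ → ℂ) : ℂ :=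
  ∫ φ in (0:ℝ)..2 * π, ∫ θ in (0:ℝ)..π, f θ φ * (Real.sin θ : ℂ)

theorem sphereIntegral_ofReal_mul_exp_zpow (g : ℝ → ℝ) (n : ℤ) :
    sphereIntegral (fun θ φ => g θ * exp (I * φ) ^ n) =
      (∫ θ in (0:ℝ)..π, g θ * Real.sin θ : ℝ) * if n = 0 then 2 * π else 0 := by
  have hinner (φ : ℝ) : ∫ θ in (0:ℝ)..π, (g θ : ℂ) * exp (I * φ) ^ n * (Real.sin θ : ℂ) =
      exp (I * φ) ^ n * (∫ θ in (0:ℝ)..π, g θ * Real.sin θ : ℝ) := by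
    rw [← intervalIntegral.integral_ofReal, ← intervalIntegral.integral_const_mul]
    congr 1; ext θ; push_cast; ring
  simp only [sphereIntegral, hinner, intervalIntegral.integral_mul_const, integral_exp_I_mul_zpow]
  ring

theorem intervalIntegrable_sphereIntegrand {f : ℝ → ℝ → ℂ} (hf : Continuous (uncurry f)) :
    IntervalIntegrable (fun φ => ∫ θ in (0:ℝ)..π, f θ φ * (Real.sin θ : ℂ)) volume 0 (2 * π) := by
  refine Continuous.intervalIntegrable ?_ _ _
  refine intervalIntegral.continuous_parametric_intervalIntegral_of_continuous' ?_ _ _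
  exact (hf.comp continuous_swap).mul (by fun_prop)

theorem intervalIntegrable_mul_sin {f : ℝ → ℝ → ℂ} (hf : Continuous (uncurry f)) (φ : ℝ) :
    IntervalIntegrable (fun θ => f θ φ * (Real.sin θ : ℂ)) volume 0 π :=
  ((hf.comp (Continuous.prodMk_left φ)).mul (by fun_prop)).intervalIntegrable _ _

theorem sphereIntegral_add {f g : ℝ → ℝ → ℂ} (hf : Continuous (uncurry f))
    (hg : Continuous (uncurry g)) :
    sphereIntegral (fun θ φ => f θ φ + g θ φ) = sphereIntegral f + sphereIntegral g := by
  simp only [sphereIntegral, add_mul]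
  rw [← intervalIntegral.integral_add (intervalIntegrable_sphereIntegrand hf)
    (intervalIntegrable_sphereIntegrand hg)]
  congr 1; ext φ
  exact intervalIntegral.integral_add (intervalIntegrable_mul_sin hf φ)
    (intervalIntegrable_mul_sin hg φ)

theorem sphereIntegral_sub {f g : ℝ → ℝ → ℂ} (hf : Continuous (uncurry f))
    (hg : Continuous (uncurry g)) :
    sphereIntegral (fun θ φ => f θ φ - g θ φ) = sphereIntegral f - sphereIntegral g := by
  simp only [sphereIntegral, sub_mul]
  rw [← intervalIntegral.integral_sub (intervalIntegrable_sphereIntegrand hf)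
    (intervalIntegrable_sphereIntegrand hg)]
  congr 1; ext φ
  exact intervalIntegral.integral_sub (intervalIntegrable_mul_sin hf φ)
    (intervalIntegrable_mul_sin hg φ)

theorem sphereIntegral_const_mul (c : ℂ) (f : ℝ → ℝ → ℂ) :
    sphereIntegral (fun θ φ => c * f θ φ) = c * sphereIntegral f := by
  simp only [sphereIntegral, mul_assoc, intervalIntegral.integral_const_mul]

theorem sphereIntegral_const (c : ℂ) : sphereIntegral (fun _ _ => c) = 4 * π * c := by
  have hsin : ∫ θ in (0:ℝ)..π, (Real.sin θ : ℂ) = 2 := by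
    rw [intervalIntegral.integral_ofReal, integral_sin]; norm_num
  simp only [sphereIntegral, intervalIntegral.integral_const_mul, hsin,
    intervalIntegral.integral_const]
  simp; ring

theorem sphereIntegral_finset_sum {ι : Type*} (s : Finset ι) {f : ι → ℝ → ℝ → ℂ}
    (hf : ∀ i ∈ s, Continuous (uncurry (f i))) :
    sphereIntegral (fun θ φ => ∑ i ∈ s, f i θ φ) = ∑ i ∈ s, sphereIntegral (f i) := by
  simp only [sphereIntegral, Finset.sum_mul]
  rw [← intervalIntegral.integral_finsetSum fun i hi =>
    intervalIntegrable_sphereIntegrand (hf i hi)]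
  congr 1; ext φ
  exact intervalIntegral.integral_finsetSum fun i hi => intervalIntegrable_mul_sin (hf i hi) φ

theorem sphereIntegral_affine_mul_affine {X Y : ℝ → ℝ → ℂ} (hX : Continuous (uncurry X))
    (hY : Continuous (uncurry Y)) (a b c d : ℂ) :
    sphereIntegral (fun θ φ => (a * X θ φ - b) * (c * Y θ φ - d)) =
      a * c * sphereIntegral (fun θ φ => X θ φ * Y θ φ) - a * d * sphereIntegral X
        - b * c * sphereIntegral Y + 4 * π * (b * d) := by
  have hXY : Continuous (uncurry fun θ φ => X θ φ * Y θ φ) := hX.mul hY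
  have hexpand : (fun θ φ => (a * X θ φ - b) * (c * Y θ φ - d)) =
      fun θ φ => a * c * (X θ φ * Y θ φ) - a * d * X θ φ - b * c * Y θ φ + b * d := by
    ext θ φ; ring
  rw [hexpand, sphereIntegral_add (by fun_prop) continuous_const,
    sphereIntegral_sub (by fun_prop) (by fun_prop), sphereIntegral_sub (by fun_prop) (by fun_prop),
    sphereIntegral_const_mul, sphereIntegral_const_mul, sphereIntegral_const_mul,
    sphereIntegral_const]

theorem cohVec_eq (θ φ : ℝ) (i : Fin 2) :
    cohVec θ φ i = cohAmp θ i * exp (I * φ) ^ (i : ℕ) := by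
  match i with
  | 0 => simp [cohVec]
  | 1 => simp [cohVec, mul_comm]

theorem star_exp_I_mul (φ : ℝ) : star (exp (I * φ)) = (exp (I * φ))⁻¹ := by
  rw [← Complex.exp_neg, Complex.star_def, ← Complex.exp_conj]
  simp

def cohProj (θ φ : ℝ) : Matrix (Fin 2) (Fin 2) ℂ := vecMulVec (cohVec θ φ) (star (cohVec θ φ))

theorem cohProj_apply (θ φ : ℝ) (i j : Fin 2) :
    cohProj θ φ i j = (cohAmp θ i * cohAmp θ j : ℝ) * exp (I * φ) ^ ((i : ℤ) - j) := by
  rw [cohProj, vecMulVec_apply, Pi.star_apply, cohVec_eq, cohVec_eq, star_mul', star_pow,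
    star_exp_I_mul, Complex.star_def, conj_ofReal, zpow_sub₀ (Complex.exp_ne_zero _),
    zpow_natCast, zpow_natCast, inv_pow]
  push_cast; ring

@[fun_prop] theorem continuous_cohProj_apply (i j : Fin 2) :
    Continuous (uncurry fun θ φ => cohProj θ φ i j) := by
  simp only [cohProj, vecMulVec_apply, Pi.star_apply, cohVec_eq]
  fun_prop

@[fun_prop] theorem continuous_trace_mul_cohProj (A : Matrix (Fin 2) (Fin 2) ℂ) :
    Continuous (uncurry fun θ φ => trace (A * cohProj θ φ)) := by
  simp only [trace, diag, mul_apply]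
  fun_prop

theorem sphereIntegral_cohProj (i j : Fin 2) :
    sphereIntegral (fun θ φ => cohProj θ φ i j) = 2 * π * δ i j := by
  simp only [cohProj_apply]
  rw [sphereIntegral_ofReal_mul_exp_zpow (fun θ => cohAmp θ i * cohAmp θ j)]
  by_cases hij : i = j
  · subst hij
    simp [← sq, integral_cohAmp_sq_mul_sin]
  · have hphase : (i : ℤ) - j ≠ 0 := by omega
    simp [hphase, hij]

theorem sphereIntegral_cohProj_mul_cohProj (i j k l : Fin 2) :
    sphereIntegral (fun θ φ => cohProj θ φ i j * cohProj θ φ k l) =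
      2 * π / 3 * (δ i j * δ k l + δ i l * δ k j) := by
  have hprod (θ φ : ℝ) : cohProj θ φ i j * cohProj θ φ k l =
      (cohAmp θ i * cohAmp θ j * (cohAmp θ k * cohAmp θ l) : ℝ) *
        exp (I * φ) ^ ((i : ℤ) - j + (k - l)) := by
    rw [cohProj_apply, cohProj_apply, zpow_add₀ (Complex.exp_ne_zero _)]; push_cast; ring
  simp only [hprod]
  rw [sphereIntegral_ofReal_mul_exp_zpow
    (fun θ => cohAmp θ i * cohAmp θ j * (cohAmp θ k * cohAmp θ l))]
  by_cases hphase : (i : ℤ) - j + (k - l) = 0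
  · have hpair : (j = i ∧ l = k) ∨ (j = k ∧ l = i) := by omega
    have hsq (θ : ℝ) : cohAmp θ i * cohAmp θ j * (cohAmp θ k * cohAmp θ l) =
        cohAmp θ i ^ 2 * cohAmp θ k ^ 2 := by
      rcases hpair with ⟨rfl, rfl⟩ | ⟨rfl, rfl⟩ <;> ring
    simp only [hphase, hsq, integral_cohAmp_sq_mul_cohAmp_sq_mul_sin, if_true, Matrix.one_apply]
    rcases hpair with ⟨rfl, rfl⟩ | ⟨rfl, rfl⟩ <;> split_ifs <;>
      first | omega | (push_cast; ring)
  · simp only [hphase, if_false, Complex.ofReal_zero, mul_zero, Matrix.one_apply]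
    split_ifs <;> first | omega | ring

theorem sphereIntegral_trace_mul_cohProj (A : Matrix (Fin 2) (Fin 2) ℂ) :
    sphereIntegral (fun θ φ => trace (A * cohProj θ φ)) = 2 * π * trace A := by
  have hrow (i : Fin 2) :
      sphereIntegral (fun θ φ => ∑ j, A i j * cohProj θ φ j i) = 2 * π * A i i := by
    rw [sphereIntegral_finset_sum _ fun j _ => by fun_prop]
    simp [sphereIntegral_const_mul, sphereIntegral_cohProj, Matrix.one_apply, mul_comm]
  simp only [trace, diag, mul_apply]
  rw [sphereIntegral_finset_sum _ fun i _ => by fun_prop]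
  simp only [hrow, ← Finset.mul_sum]

theorem sphereIntegral_trace_mul_cohProj_mul_cohProj (A : Matrix (Fin 2) (Fin 2) ℂ)
    (k l : Fin 2) :
    sphereIntegral (fun θ φ => trace (A * cohProj θ φ) * cohProj θ φ k l) =
      2 * π / 3 * (A k l + trace A * δ k l) := by
  have hrow (i : Fin 2) :
      sphereIntegral (fun θ φ => ∑ j, A i j * (cohProj θ φ j i * cohProj θ φ k l)) =
        2 * π / 3 * (δ k i * A i l + A i i * δ k l) := by
    rw [sphereIntegral_finset_sum _ fun j _ => by fun_prop]
    simp only [sphereIntegral_const_mul, sphereIntegral_cohProj_mul_cohProj, Matrix.one_apply,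
      mul_add, Finset.sum_add_distrib]
    simp
    split_ifs <;> ring
  simp only [trace, diag, mul_apply, Finset.sum_mul, mul_assoc]
  rw [sphereIntegral_finset_sum _ fun i _ => by fun_prop]
  simp only [hrow, ← Finset.mul_sum, Finset.sum_add_distrib]
  rw [← Matrix.mul_apply, Matrix.one_mul, ← Finset.sum_mul]

theorem lam_mul_lam_neg (s : ℝ) : lam s * lam (-s) = 3 := by
  rw [lam, lam, ← Real.rpow_add (by norm_num), show (1 + s) / 2 + (1 + -s) / 2 = 1 by ring,
    Real.rpow_one]

theorem swKernel_eq (s θ φ : ℝ) :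
    swKernel s θ φ =
      (2 * (π : ℂ))⁻¹ • ((lam s : ℂ) • cohProj θ φ - ((lam s - 1) / 2 : ℂ) • 1) := by
  rw [swKernel, one_div]
  push_cast; rfl

theorem trace_mul_swKernel (A : Matrix (Fin 2) (Fin 2) ℂ) (s θ φ : ℝ) :
    trace (A * swKernel s θ φ) = (2 * (π : ℂ))⁻¹ * lam s * trace (A * cohProj θ φ)
      - (2 * (π : ℂ))⁻¹ * ((lam s - 1) / 2) * trace A := by
  rw [swKernel_eq, Matrix.mul_smul, trace_smul, Matrix.mul_sub, trace_sub, Matrix.mul_smul,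
    Matrix.mul_smul, trace_smul, trace_smul, Matrix.mul_one, smul_eq_mul, smul_eq_mul, smul_eq_mul]
  ring

theorem swKernel_apply (s θ φ : ℝ) (k l : Fin 2) :
    swKernel s θ φ k l = (2 * (π : ℂ))⁻¹ * lam s * cohProj θ φ k l
      - (2 * (π : ℂ))⁻¹ * ((lam s - 1) / 2) * δ k l := by
  simp only [swKernel_eq, Matrix.smul_apply, Matrix.sub_apply, smul_eq_mul]
  ring

theorem sw_kernel_duality_inversion_general (s : ℝ)
    (A : Matrix (Fin 2) (Fin 2) ℂ) (k l : Fin 2) :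
    (2 * Real.pi : ℂ) *
      ∫ φ in (0:ℝ)..(2 * Real.pi), ∫ θ in (0:ℝ)..Real.pi,
        Matrix.trace (A * swKernel s θ φ) * swKernel (-s) θ φ k l
          * ((Real.sin θ : ℝ) : ℂ)
    = A k l := by
  change (2 * π : ℂ) *
    sphereIntegral (fun θ φ => trace (A * swKernel s θ φ) * swKernel (-s) θ φ k l) = A k l
  simp only [trace_mul_swKernel, swKernel_apply]
  rw [sphereIntegral_affine_mul_affine (continuous_trace_mul_cohProj A)
      (continuous_cohProj_apply k l),
    sphereIntegral_trace_mul_cohProj_mul_cohProj, sphereIntegral_trace_mul_cohProj,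
    sphereIntegral_cohProj]
  have hπ : (π : ℂ) ≠ 0 := ofReal_ne_zero.mpr Real.pi_ne_zero
  have hlam : (lam s : ℂ) * lam (-s) = 3 := by exact_mod_cast lam_mul_lam_neg s
  field_simp
  linear_combination (8 * A k l - 4 * trace A * δ k l) * hlam

/-- the Stratonovich–Weyl map is inverted by the dual kernel:
2π ∫ Tr[A Δ^{(s)}(θ,φ)] Δ^{(−s)}(θ,φ) sinθ dθ dφ = A (entrywise). -/
theorem sw_kernel_duality_inversion (s : ℝ) (hs : s ∈ Set.Icc (-1 : ℝ) 1)
    (A : Matrix (Fin 2) (Fin 2) ℂ) (k l : Fin 2) :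
    (2 * Real.pi : ℂ) *
      ∫ φ in (0:ℝ)..(2 * Real.pi), ∫ θ in (0:ℝ)..Real.pi,
        Matrix.trace (A * swKernel s θ φ) * swKernel (-s) θ φ k l
          * ((Real.sin θ : ℝ) : ℂ)
    = A k l :=
  sw_kernel_duality_inversion_general s A k l
end
end
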